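/- Let f : X × Y → ℝ be continuous on X × Y where X ⊆ ℝ^p and Y ⊆ ℝ^q are compact, and suppose f is bounded below. Let (x_t, y_t) be generated by alternate minimization: x_{t+1} ∈ argmin_{x∈X} f(x, y_t), y_{t+1} ∈ argmin_{y∈Y} f(x_{t+1}, y). Then every accumulation point (x*, y*) of the sequence (x_t, y_t) is a partial optimum: f(x*, y*) ≤ f(x, y*) for all x ∈ X and f(x*, y*) ≤ f(x*, y) for all y ∈ Y. -/

import Mathlib

/-!
The values `f (x t, y t)` decrease along the iteration, since each half-step minimizes over one
block. Along a subsequence `φ` with `(x (φ k), y (φ k)) → (xs, ys)`, the minimality of the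
`x`-step at time `φ k` and monotonicity give `f (x (φ (k+1)), y (φ (k+1))) ≤ f (a, y (φ k))`,
and the minimality of the `y`-step gives `f (x (φ k), y (φ k)) ≤ f (x (φ k), b)`. Continuity of
`f` passes both inequalities to the limit.
-/

open Filter Topology

theorem ContinuousOn.tendsto_comp_of_mem {α γ : Type*} [TopologicalSpace α] [TopologicalSpace γ]
    {s : Set α} {f : α → γ} (hf : ContinuousOn f s) {u : ℕ → α} {z : α} (hz : z ∈ s)
    (hus : ∀ k, u k ∈ s) (hu : Tendsto u atTop (𝓝 z)) :
    Tendsto (fun k => f (u k)) atTop (𝓝 (f z)) :=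
  (hf z hz).tendsto.comp (tendsto_nhdsWithin_iff.2 ⟨hu, Eventually.of_forall hus⟩)

section AlternatingMinimization

variable {α β γ : Type*}

structure AlternatingMinimization [Preorder γ] (X : Set α) (Y : Set β) (f : α × β → γ)
    (x : ℕ → α) (y : ℕ → β) : Prop where
  fst_mem : ∀ t, x t ∈ X
  snd_mem : ∀ t, y t ∈ Y
  fst_le : ∀ t, ∀ a ∈ X, f (x (t + 1), y t) ≤ f (a, y t)
  snd_le : ∀ t, ∀ b ∈ Y, f (x (t + 1), y (t + 1)) ≤ f (x (t + 1), b)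

def IsPartialOptimum [Preorder γ] (X : Set α) (Y : Set β) (f : α × β → γ) (z : α × β) :
    Prop :=
  (∀ a ∈ X, f z ≤ f (a, z.2)) ∧ ∀ b ∈ Y, f z ≤ f (z.1, b)

namespace AlternatingMinimization

variable {X : Set α} {Y : Set β} {x : ℕ → α} {y : ℕ → β}

section Order

variable [Preorder γ] {f : α × β → γ}

theorem antitone (h : AlternatingMinimization X Y f x y) : Antitone fun t => f (x t, y t) :=
  antitone_nat_of_succ_le fun t =>
    (h.snd_le t (y t) (h.snd_mem t)).trans (h.fst_le t (x t) (h.fst_mem t))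

theorem le_fst (h : AlternatingMinimization X Y f x y) {s t : ℕ} (hst : s < t)
    {a : α} (ha : a ∈ X) : f (x t, y t) ≤ f (a, y s) :=
  calc f (x t, y t) ≤ f (x (s + 1), y (s + 1)) := h.antitone hst
    _ ≤ f (x (s + 1), y s) := h.snd_le s (y s) (h.snd_mem s)
    _ ≤ f (a, y s) := h.fst_le s a ha

theorem le_snd (h : AlternatingMinimization X Y f x y) {t : ℕ} (ht : 0 < t)
    {b : β} (hb : b ∈ Y) : f (x t, y t) ≤ f (x t, b) := by
  obtain ⟨s, rfl⟩ := Nat.exists_eq_succ_of_ne_zero ht.ne'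
  exact h.snd_le s b hb

end Order

variable [TopologicalSpace α] [TopologicalSpace β] [TopologicalSpace γ] [Preorder γ]
  [OrderClosedTopology γ] {f : α × β → γ}

theorem isPartialOptimum_of_tendsto_subseq (h : AlternatingMinimization X Y f x y)
    (hf : ContinuousOn f (X ×ˢ Y)) {xs : α} {ys : β} (hxs : xs ∈ X) (hys : ys ∈ Y)
    {φ : ℕ → ℕ} (hφ : StrictMono φ) (hxφ : Tendsto (x ∘ φ) atTop (𝓝 xs))
    (hyφ : Tendsto (y ∘ φ) atTop (𝓝 ys)) : IsPartialOptimum X Y f (xs, ys) := by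
  have hval : Tendsto (fun k => f (x (φ k), y (φ k))) atTop (𝓝 (f (xs, ys))) :=
    hf.tendsto_comp_of_mem ⟨hxs, hys⟩ (fun k => ⟨h.fst_mem _, h.snd_mem _⟩)
      (hxφ.prodMk_nhds hyφ)
  constructor
  · intro a ha
    have hval_succ := hval.comp (tendsto_add_atTop_nat 1)
    have hright : Tendsto (fun k => f (a, y (φ k))) atTop (𝓝 (f (a, ys))) :=
      hf.tendsto_comp_of_mem ⟨ha, hys⟩ (fun k => ⟨ha, h.snd_mem _⟩)
        (tendsto_const_nhds.prodMk_nhds hyφ)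
    exact le_of_tendsto_of_tendsto' hval_succ hright fun k => h.le_fst (hφ k.lt_succ_self) ha
  · intro b hb
    have hright : Tendsto (fun k => f (x (φ k), b)) atTop (𝓝 (f (xs, b))) :=
      hf.tendsto_comp_of_mem ⟨hxs, hb⟩ (fun k => ⟨h.fst_mem _, hb⟩)
        (hxφ.prodMk_nhds tendsto_const_nhds)
    refine le_of_tendsto_of_tendsto hval hright ?_
    filter_upwards [eventually_gt_atTop 0] with k hk
    exact h.le_snd (hk.trans_le hφ.le_apply) hb

theorem isPartialOptimum_of_mapClusterPt [FirstCountableTopology α] [FirstCountableTopology β]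
    (h : AlternatingMinimization X Y f x y) (hX : IsClosed X) (hY : IsClosed Y)
    (hf : ContinuousOn f (X ×ˢ Y)) {z : α × β}
    (hz : MapClusterPt z atTop fun t => (x t, y t)) : IsPartialOptimum X Y f z := by
  obtain ⟨φ, hφ, hzφ⟩ := hz.tendsto_subseq
  have hxφ : Tendsto (x ∘ φ) atTop (𝓝 z.1) := (continuous_fst.tendsto z).comp hzφ
  have hyφ : Tendsto (y ∘ φ) atTop (𝓝 z.2) := (continuous_snd.tendsto z).comp hzφ
  exact h.isPartialOptimum_of_tendsto_subseq hf
    (hX.mem_of_tendsto hxφ (Eventually.of_forall fun _ => h.fst_mem _))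
    (hY.mem_of_tendsto hyφ (Eventually.of_forall fun _ => h.snd_mem _)) hφ hxφ hyφ

end AlternatingMinimization

end AlternatingMinimization

theorem stmt_13_general {p q : ℕ}
    (X : Set (Fin p → ℝ)) (Y : Set (Fin q → ℝ))
    (hXc : IsCompact X) (hYc : IsCompact Y)
    (f : (Fin p → ℝ) × (Fin q → ℝ) → ℝ)
    (hf : ContinuousOn f (X ×ˢ Y))
    (x : ℕ → Fin p → ℝ) (y : ℕ → Fin q → ℝ)
    (hxmem : ∀ t, x t ∈ X) (hymem : ∀ t, y t ∈ Y)
    (hx : ∀ t, ∀ a ∈ X, f (x (t + 1), y t) ≤ f (a, y t))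
    (hy : ∀ t, ∀ b ∈ Y, f (x (t + 1), y (t + 1)) ≤ f (x (t + 1), b))
    (xs : Fin p → ℝ) (ys : Fin q → ℝ)
    (hacc : MapClusterPt (xs, ys) atTop (fun t => (x t, y t))) :
    (∀ a ∈ X, f (xs, ys) ≤ f (a, ys)) ∧ (∀ b ∈ Y, f (xs, ys) ≤ f (xs, b)) :=
  AlternatingMinimization.isPartialOptimum_of_mapClusterPt ⟨hxmem, hymem, hx, hy⟩
    hXc.isClosed hYc.isClosed hf hacc

/-- For alternate minimization of a continuous function `f` on a product of
compact sets, bounded below, every accumulation point of the iterate sequence is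
a partial optimum. -/
theorem stmt_13 {p q : ℕ}
    (X : Set (Fin p → ℝ)) (Y : Set (Fin q → ℝ))
    (hXc : IsCompact X) (hYc : IsCompact Y)
    (hXne : X.Nonempty) (hYne : Y.Nonempty)
    (f : (Fin p → ℝ) × (Fin q → ℝ) → ℝ)
    (hf : ContinuousOn f (X ×ˢ Y))
    (hbdd : ∃ C : ℝ, ∀ z ∈ X ×ˢ Y, C ≤ f z)
    (x : ℕ → Fin p → ℝ) (y : ℕ → Fin q → ℝ)
    (hxmem : ∀ t, x t ∈ X) (hymem : ∀ t, y t ∈ Y)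
    (hx : ∀ t, ∀ a ∈ X, f (x (t + 1), y t) ≤ f (a, y t))
    (hy : ∀ t, ∀ b ∈ Y, f (x (t + 1), y (t + 1)) ≤ f (x (t + 1), b))
    (xs : Fin p → ℝ) (ys : Fin q → ℝ)
    (hacc : MapClusterPt (xs, ys) atTop (fun t => (x t, y t))) :
    (∀ a ∈ X, f (xs, ys) ≤ f (a, ys)) ∧ (∀ b ∈ Y, f (xs, ys) ≤ f (xs, b)) :=
  stmt_13_general X Y hXc hYc f hf x y hxmem hymem hx hy xs ys hacc
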